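/- Let ε = inf_{W ∈ ℝ^m} ℓ_λ(W). If ε < λ^{1 + 1/H} / (2 (H(H+1) r)^{2/H}), then there exists θ with λ > θ > 0 such that every global minimizer of ℓ_λ lies in U(λ,θ). -/

import Mathlib

open scoped BigOperators

/-- Index set for all weights of the network: a weight `w^i_{j,k}` connects
neuron `j` in layer `i` to neuron `k` in layer `i+1`. -/
abbrev WeightIdx (n : ℕ → ℕ) (H : ℕ) : Type :=
  (i : Fin (H + 1)) × (Fin (n i) × Fin (n (i + 1)))

/-- Weight space `ℝ^m`, with the Euclidean norm. -/
abbrev WeightSpace (n : ℕ → ℕ) (H : ℕ) : Type :=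
  EuclideanSpace ℝ (WeightIdx n H)

/-- Activations of the feed-forward ReLU network:
`x_0 = a`, `x_{k+1} = σ(W_k^T x_k)`. -/
def netAct (n : ℕ → ℕ) (H : ℕ) (W : WeightSpace n H)
    (a : EuclideanSpace ℝ (Fin (n 0))) : (k : ℕ) → k ≤ H + 1 → (Fin (n k) → ℝ)
  | 0, _ => a
  | k + 1, h => fun j =>
      max (∑ l : Fin (n k), W ⟨⟨k, h⟩, (l, j)⟩ * netAct n H W a k (Nat.le_of_succ_le h) l) 0

/-- Scalar output of the ReLU network, `y(a, W)`. -/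
def netOut (n : ℕ → ℕ) (H : ℕ) (hout : n (H + 1) = 1) (W : WeightSpace n H)
    (a : EuclideanSpace ℝ (Fin (n 0))) : ℝ :=
  netAct n H W a (H + 1) le_rfl ⟨0, by omega⟩

/-- Quadratic training loss `ℓ(W)`. -/
noncomputable def loss (n : ℕ → ℕ) (H N : ℕ) (hout : n (H + 1) = 1)
    (a : Fin N → EuclideanSpace ℝ (Fin (n 0)))
    (f : EuclideanSpace ℝ (Fin (n 0)) → ℝ) (W : WeightSpace n H) : ℝ :=
  (1 / (2 * (N : ℝ))) * ∑ i, (f (a i) - netOut n H hout W (a i)) ^ 2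

/-- Regularized loss `ℓ_λ(W) = ℓ(W) + (λ/2)‖W‖²`. -/
noncomputable def lossReg (n : ℕ → ℕ) (H N : ℕ) (hout : n (H + 1) = 1)
    (a : Fin N → EuclideanSpace ℝ (Fin (n 0)))
    (f : EuclideanSpace ℝ (Fin (n 0)) → ℝ) (lam : ℝ) (W : WeightSpace n H) : ℝ :=
  loss n H N hout a f W + lam / 2 * ‖W‖ ^ 2

/-- The `i`-th weight matrix `W_i` of a weight vector `W`. -/
def block (n : ℕ → ℕ) (H : ℕ) (W : WeightSpace n H) (i : Fin (H + 1)) :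
    Matrix (Fin (n i)) (Fin (n (i + 1))) ℝ :=
  Matrix.of fun j k => W ⟨i, (j, k)⟩

/-- Operator norm (induced by the Euclidean norms) of a matrix. -/
noncomputable def opNorm2 {p q : ℕ} (M : Matrix (Fin p) (Fin q) ℝ) : ℝ :=
  ‖LinearMap.toContinuousLinearMap (Matrix.toEuclideanLin M)‖

/-- `‖W‖_* = max_i ‖W_i‖₂`. -/
noncomputable def starNorm (n : ℕ → ℕ) (H : ℕ) (W : WeightSpace n H) : ℝ :=
  ⨆ i : Fin (H + 1), opNorm2 (block n H W i)

/-- The set `U(λ,θ)`. -/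
noncomputable def Uset (n : ℕ → ℕ) (H N : ℕ) (hout : n (H + 1) = 1)
    (a : Fin N → EuclideanSpace ℝ (Fin (n 0)))
    (f : EuclideanSpace ℝ (Fin (n 0)) → ℝ) (lam θ r : ℝ) : Set (WeightSpace n H) :=
  {W | Real.sqrt (loss n H N hout a f W) * starNorm n H W ^ (H - 1) <
    (lam - θ) / (Real.sqrt 2 * ((H : ℝ) * ((H : ℝ) + 1)) * r)}

/-!
A global minimizer `W` attains `ε = inf ℓ_λ`, so `ℓ(W) ≤ ε` and `(λ/2)‖W‖² ≤ ε`. Every operator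
norm is bounded by the Frobenius norm, hence `‖W‖_* ≤ ‖W‖`, and therefore
`ℓ(W)^{1/2} ‖W‖_*^{H-1} ≤ ε^{1/2} (2ε/λ)^{(H-1)/2}`. Raising the hypothesis on `ε` to the `H`-th
power gives `2^H (H(H+1)r)² ε^H < λ^{H+1}`, which says exactly that this bound lies strictly below
`λ / (√2 H(H+1) r)`; any `θ` in the gap works for all minimizers at once.
-/

open Real

lemma opNorm2_le_sqrt_sum_sq {p q : ℕ} (M : Matrix (Fin p) (Fin q) ℝ) :
    opNorm2 M ≤ √(∑ i, ∑ j, M i j ^ 2) := by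
  refine ContinuousLinearMap.opNorm_le_bound _ (sqrt_nonneg _) fun x => ?_
  rw [LinearMap.coe_toContinuousLinearMap', ← pow_le_pow_iff_left₀ (norm_nonneg _)
    (by positivity) two_ne_zero, mul_pow, sq_sqrt (by positivity), EuclideanSpace.norm_sq_eq,
    EuclideanSpace.norm_sq_eq, Finset.sum_mul]
  refine Finset.sum_le_sum fun i _ => ?_
  simpa [Matrix.mulVec, dotProduct] using Finset.sum_mul_sq_le_sq_mul_sq _ (M i) x.ofLp

lemma sum_sq_block_le_norm_sq (n : ℕ → ℕ) (H : ℕ) (W : WeightSpace n H) (i : Fin (H + 1)) :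
    ∑ j, ∑ k, block n H W i j k ^ 2 ≤ ‖W‖ ^ 2 := by
  rw [EuclideanSpace.norm_sq_eq, ← Finset.univ_sigma_univ, Finset.sum_sigma]
  refine le_of_eq_of_le ?_ (Finset.single_le_sum (fun i' _ => by positivity) (Finset.mem_univ i))
  simp [block, Fintype.sum_prod_type]

lemma starNorm_le_norm (n : ℕ → ℕ) (H : ℕ) (W : WeightSpace n H) : starNorm n H W ≤ ‖W‖ :=
  ciSup_le fun i => (opNorm2_le_sqrt_sum_sq _).trans <|
    (sqrt_le_left (norm_nonneg W)).2 (sum_sq_block_le_norm_sq n H W i)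

lemma starNorm_nonneg (n : ℕ → ℕ) (H : ℕ) (W : WeightSpace n H) : 0 ≤ starNorm n H W :=
  Real.iSup_nonneg fun _ => norm_nonneg _

section Loss

variable (n : ℕ → ℕ) (H N : ℕ) (hout : n (H + 1) = 1) (a : Fin N → EuclideanSpace ℝ (Fin (n 0)))
  (f : EuclideanSpace ℝ (Fin (n 0)) → ℝ)

lemma loss_nonneg (W : WeightSpace n H) : 0 ≤ loss n H N hout a f W := by
  unfold loss
  positivity

lemma lossReg_nonneg {lam : ℝ} (hlam : 0 ≤ lam) (W : WeightSpace n H) :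
    0 ≤ lossReg n H N hout a f lam W :=
  add_nonneg (loss_nonneg n H N hout a f W) (by positivity)

lemma sqrt_loss_mul_starNorm_pow_le {lam ε : ℝ} (hlam : 0 < lam) {W : WeightSpace n H}
    (hW : lossReg n H N hout a f lam W ≤ ε) (k : ℕ) :
    √(loss n H N hout a f W) * starNorm n H W ^ k ≤ √ε * √(2 * ε / lam) ^ k := by
  rw [lossReg] at hW
  have hloss : loss n H N hout a f W ≤ ε := (le_add_of_nonneg_right (by positivity)).trans hW
  have hnorm : ‖W‖ ≤ √(2 * ε / lam) :=
    le_sqrt_of_sq_le (by rw [le_div_iff₀ hlam]; linarith [loss_nonneg n H N hout a f W])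
  exact mul_le_mul (sqrt_le_sqrt hloss)
    (pow_le_pow_left₀ (starNorm_nonneg n H W) ((starNorm_le_norm n H W).trans hnorm) k)
    (pow_nonneg (starNorm_nonneg n H W) k) (sqrt_nonneg _)

end Loss

lemma two_pow_mul_sq_mul_pow_lt {H : ℕ} (hH : H ≠ 0) {ε lam C : ℝ} (hε : 0 ≤ ε) (hlam : 0 < lam)
    (hC : 0 < C) (h : ε < lam ^ ((1 : ℝ) + 1 / H) / (2 * C ^ ((2 : ℝ) / H))) :
    2 ^ H * C ^ 2 * ε ^ H < lam ^ (H + 1) := by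
  have hH' : (H : ℝ) ≠ 0 := Nat.cast_ne_zero.2 hH
  have hlam_pow : (lam ^ ((1 : ℝ) + 1 / H)) ^ H = lam ^ (H + 1) := by
    rw [← rpow_natCast, ← rpow_mul hlam.le, ← rpow_natCast]
    congr 1
    push_cast
    field_simp
  have hC_pow : (C ^ ((2 : ℝ) / H)) ^ H = C ^ 2 := by
    rw [← rpow_natCast, ← rpow_mul hC.le, ← rpow_natCast]
    congr 1
    push_cast
    field_simp
  have hpow := pow_lt_pow_left₀ h hε hH
  rw [div_pow, mul_pow, hlam_pow, hC_pow, lt_div_iff₀ (by positivity)] at hpow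
  linarith

lemma sqrt_mul_sqrt_pow_mul_lt {H : ℕ} (hH : 1 ≤ H) {ε lam C : ℝ} (hε : 0 ≤ ε) (hlam : 0 < lam)
    (h : 2 ^ H * C ^ 2 * ε ^ H < lam ^ (H + 1)) :
    √ε * √(2 * ε / lam) ^ (H - 1) * (√2 * C) < lam := by
  obtain ⟨K, rfl⟩ := Nat.exists_eq_add_of_le' hH
  rw [Nat.add_sub_cancel]
  refine lt_of_pow_lt_pow_left₀ 2 hlam.le ?_
  calc (√ε * √(2 * ε / lam) ^ K * (√2 * C)) ^ 2
      = 2 ^ (K + 1) * C ^ 2 * ε ^ (K + 1) / lam ^ K := by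
        rw [mul_pow, mul_pow, mul_pow, ← pow_mul, mul_comm K, pow_mul, sq_sqrt hε,
          sq_sqrt (by positivity), sq_sqrt zero_le_two, div_pow, mul_pow]
        field_simp
        ring
    _ < lam ^ (K + 1 + 1) / lam ^ K := by gcongr
    _ = lam ^ 2 := by rw [add_assoc, pow_add, mul_div_cancel_left₀ _ (by positivity)]

lemma exists_pos_lt_sub_div {A D lam : ℝ} (hD : 0 < D) (hA : 0 ≤ A) (h : A * D < lam) :
    ∃ θ, 0 < θ ∧ θ < lam ∧ A < (lam - θ) / D :=
  ⟨(lam - A * D) / 2, by linarith, by nlinarith [mul_nonneg hA hD.le],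
    by rw [lt_div_iff₀ hD]; linarith⟩

theorem global_minimizers_in_Uset_general (n : ℕ → ℕ) (H : ℕ) (hH : 1 ≤ H)
    (hout : n (H + 1) = 1)
    (N : ℕ) (a : Fin N → EuclideanSpace ℝ (Fin (n 0)))
    (f : EuclideanSpace ℝ (Fin (n 0)) → ℝ)
    (r lam : ℝ) (hr : 0 < r) (hlam : 0 < lam)
    (heps : (⨅ W : WeightSpace n H, lossReg n H N hout a f lam W) <
      lam ^ ((1 : ℝ) + 1 / (H : ℝ)) /
        (2 * ((H : ℝ) * ((H : ℝ) + 1) * r) ^ ((2 : ℝ) / (H : ℝ)))) :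
    ∃ θ : ℝ, 0 < θ ∧ θ < lam ∧
      ∀ W : WeightSpace n H,
        (∀ V : WeightSpace n H, lossReg n H N hout a f lam W ≤ lossReg n H N hout a f lam V) →
        W ∈ Uset n H N hout a f lam θ r := by
  set ε := ⨅ W : WeightSpace n H, lossReg n H N hout a f lam W
  have hε : 0 ≤ ε := le_ciInf (lossReg_nonneg n H N hout a f hlam.le)
  have hC : 0 < (H : ℝ) * (H + 1) * r := by
    have : (0 : ℝ) < H := by exact_mod_cast hH
    positivity
  obtain ⟨θ, hθ, hθlam, hA⟩ := exists_pos_lt_sub_div (by positivity) (by positivity)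
    (sqrt_mul_sqrt_pow_mul_lt hH hε hlam (two_pow_mul_sq_mul_pow_lt (by omega) hε hlam hC heps))
  refine ⟨θ, hθ, hθlam, fun W hW => ?_⟩
  rw [Uset, Set.mem_ofPred_eq, mul_assoc √2]
  exact (sqrt_loss_mul_starNorm_pow_le n H N hout a f hlam (le_ciInf hW) (H - 1)).trans_lt hA

/-- if `ε = inf ℓ_λ < λ^{1+1/H} / (2(H(H+1)r)^{2/H})`, then there is
`λ > θ > 0` such that every global minimizer of `ℓ_λ` lies in `U(λ,θ)`. -/
theorem global_minimizers_in_Uset (n : ℕ → ℕ) (H : ℕ) (hH : 1 ≤ H)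
    (hout : n (H + 1) = 1) (hwidth : ∀ i, 1 ≤ i → i ≤ H → 1 < n i)
    (N : ℕ) (a : Fin N → EuclideanSpace ℝ (Fin (n 0)))
    (f : EuclideanSpace ℝ (Fin (n 0)) → ℝ)
    (r lam : ℝ) (hr : 0 < r) (hlam : 0 < lam) (hnorm : ∀ i, ‖a i‖ ≤ r)
    (heps : (⨅ W : WeightSpace n H, lossReg n H N hout a f lam W) <
      lam ^ ((1 : ℝ) + 1 / (H : ℝ)) /
        (2 * ((H : ℝ) * ((H : ℝ) + 1) * r) ^ ((2 : ℝ) / (H : ℝ)))) :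
    ∃ θ : ℝ, 0 < θ ∧ θ < lam ∧
      ∀ W : WeightSpace n H,
        (∀ V : WeightSpace n H, lossReg n H N hout a f lam W ≤ lossReg n H N hout a f lam V) →
        W ∈ Uset n H N hout a f lam θ r :=
  global_minimizers_in_Uset_general n H hH hout N a f r lam hr hlam heps
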